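/- Let d ≥ 2 be an integer, d′ = d/(d−1), A a d-fold array of real numbers indexed by {1,…,n}^d, and let ξ = (ξ_1, …, ξ_n) be a random vector with ‖ξ‖_{E_d} < ∞. Let C > 0 be a constant such that for every centered random variable η with ‖η‖_{ψ_1} < ∞ and every t with |t| ≤ 1/(C‖η‖_{ψ_1}), E exp(tη) ≤ exp(C² ‖η‖_{ψ_1}² t²). Then for every t ≥ 0, P(|S_d(ξ) − E S_d(ξ)| ≥ t) ≤ 2 e^{−g(t)}, where g(t) = t² / (16 C² ‖A‖_{d′}² ‖ξ‖_{E_d}^{2d}) if 0 ≤ t ≤ 4C ‖A‖_{d′} ‖ξ‖_{E_d}^d, and g(t) = t / (2C ‖A‖_{d′} ‖ξ‖_{E_d}^d) − 1 if t > 4C ‖A‖_{d′} ‖ξ‖_{E_d}^d. -/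

import Mathlib

open MeasureTheory ENNReal

universe u

/-- The Luxemburg (ψ_1) norm of a real random variable:
`‖η‖_{ψ_1} = inf{K > 0 : E exp(|η/K|) ≤ 2}` (with value `∞` if no such `K` exists). -/
noncomputable def psi1Norm {Ω : Type*} [MeasurableSpace Ω] (μ : Measure Ω)
    (η : Ω → ℝ) : ℝ≥0∞ :=
  ⨅ (K : ℝ) (_ : 0 < K)
    (_ : ∫⁻ ω, ENNReal.ofReal (Real.exp (|η ω / K|)) ∂μ ≤ 2), ENNReal.ofReal K

/-- `‖ξ‖_{E_p} = inf{K > 0 : E exp(∑_i |ξ_i|^p / K^p) ≤ 2}`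
(with value `∞` if no such `K` exists). -/
noncomputable def epNorm {Ω : Type*} [MeasurableSpace Ω] {n : ℕ} (μ : Measure Ω) (p : ℝ)
    (ξ : Fin n → Ω → ℝ) : ℝ≥0∞ :=
  ⨅ (K : ℝ) (_ : 0 < K)
    (_ : ∫⁻ ω, ENNReal.ofReal (Real.exp ((∑ i, |ξ i ω| ^ p) / K ^ p)) ∂μ ≤ 2),
    ENNReal.ofReal K

/-- `S_d(x) = ∑_{i₁,…,i_d} a_{i₁,…,i_d} x_{i₁} ⋯ x_{i_d}`. -/
noncomputable def chaos {d n : ℕ} (A : (Fin d → Fin n) → ℝ) (x : Fin n → ℝ) : ℝ :=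
  ∑ i : Fin d → Fin n, A i * ∏ k, x (i k)

/-- `‖A‖_{d'} = (∑ |a_{i₁,…,i_d}|^{d'})^{1/d'}` with `d' = d/(d-1)`. -/
noncomputable def arrayNorm {d n : ℕ} (A : (Fin d → Fin n) → ℝ) : ℝ :=
  (∑ i : Fin d → Fin n, |A i| ^ ((d : ℝ) / ((d : ℝ) - 1))) ^ (((d : ℝ) - 1) / (d : ℝ))

/-!
By Hölder's inequality `|S_d(x)| ≤ ‖A‖_{d'} ∑ |x_i|^d`, and the infimum defining
`τ = ‖ξ‖_{E_d}` is attained, so `g = ∑ |ξ_i|^d / τ^d` satisfies `E exp g ≤ 2`. Hence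
`S_d(ξ)` is dominated by `M g` with `M = ‖A‖_{d'} τ^d`; Jensen bounds its mean by `M log 2`, and
the centred chaos has ψ₁-norm at most `2M`. The assumed moment generating function bound then
holds with `2M`, and Chernoff's inequality, optimised over the exponent, gives the tail.
-/

open Filter Topology

lemma arrayNorm_nonneg {d n : ℕ} (A : (Fin d → Fin n) → ℝ) : 0 ≤ arrayNorm A := by
  unfold arrayNorm; positivity

/-- Hölder's inequality with exponents `d/(d-1)` and `d`, followed by
`∑_i ∏_k |x_{i_k}|^d = (∑_j |x_j|^d)^d`. -/
lemma abs_chaos_le {d n : ℕ} (hd : 2 ≤ d) (A : (Fin d → Fin n) → ℝ) (x : Fin n → ℝ) :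
    |chaos A x| ≤ arrayNorm A * ∑ j, |x j| ^ (d : ℝ) := by
  have hd1 : (1 : ℝ) < d := by exact_mod_cast hd
  have hpq : Real.HolderConjugate ((d : ℝ) / ((d : ℝ) - 1)) d :=
    ((Real.holderConjugate_iff_eq_conjExponent hd1).mpr rfl).symm
  have hprod : ∑ i : Fin d → Fin n, (∏ k, |x (i k)|) ^ (d : ℝ) =
      (∑ j, |x j| ^ (d : ℝ)) ^ d := by
    simp_rw [← Real.finsetProd_rpow _ _ fun k _ => abs_nonneg (x _), Finset.sum_pow',
      Fintype.piFinset_univ]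
  calc |chaos A x| ≤ ∑ i : Fin d → Fin n, |A i| * ∏ k, |x (i k)| := by
        unfold chaos
        simpa only [abs_mul, Finset.abs_prod] using
          Finset.abs_sum_le_sum_abs (fun i : Fin d → Fin n => A i * ∏ k, x (i k)) Finset.univ
    _ ≤ (∑ i : Fin d → Fin n, |A i| ^ ((d : ℝ) / ((d : ℝ) - 1))) ^
            (1 / ((d : ℝ) / ((d : ℝ) - 1))) *
          (∑ i : Fin d → Fin n, (∏ k, |x (i k)|) ^ (d : ℝ)) ^ (1 / (d : ℝ)) :=
        Real.inner_le_Lp_mul_Lq_of_nonneg _ hpq (fun _ _ => abs_nonneg _)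
          fun _ _ => by positivity
    _ = arrayNorm A * ∑ j, |x j| ^ (d : ℝ) := by
        rw [hprod, one_div_div, ← Real.rpow_natCast, ← Real.rpow_mul (by positivity),
          mul_one_div_cancel (by positivity), Real.rpow_one, arrayNorm]

lemma measurable_chaos {Ω : Type*} [MeasurableSpace Ω] {d n : ℕ} (A : (Fin d → Fin n) → ℝ)
    {ξ : Fin n → Ω → ℝ} (hmeas : ∀ i, Measurable (ξ i)) :
    Measurable fun ω => chaos A (fun i => ξ i ω) := by
  unfold chaos; fun_prop

section Orlicz

variable {Ω : Type*} [MeasurableSpace Ω] {μ : Measure Ω}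

lemma lintegral_exp_le_two_of_epNorm_lt {n : ℕ} {ξ : Fin n → Ω → ℝ} {p K : ℝ} (hp : 0 < p)
    (h : epNorm μ p ξ < ENNReal.ofReal K) :
    ∫⁻ ω, ENNReal.ofReal (Real.exp ((∑ i, |ξ i ω| ^ p) / K ^ p)) ∂μ ≤ 2 := by
  simp only [epNorm, iInf_lt_iff] at h
  obtain ⟨K', hK', hfeas, hlt⟩ := h
  have hK'K : K' ≤ K := (ENNReal.ofReal_lt_ofReal_iff_of_nonneg hK'.le).mp hlt |>.le
  refine le_trans (lintegral_mono fun ω => ENNReal.ofReal_le_ofReal ?_) hfeas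
  gcongr

/-- The infimum defining `epNorm` is attained, by Fatou's lemma as `K ↓ ‖ξ‖_{E_p}`. -/
lemma lintegral_exp_div_epNorm_le_two {n : ℕ} {ξ : Fin n → Ω → ℝ} {p : ℝ}
    (hmeas : ∀ i, Measurable (ξ i)) (hp : 0 < p) (hτ : 0 < (epNorm μ p ξ).toReal) :
    ∫⁻ ω, ENNReal.ofReal (Real.exp ((∑ i, |ξ i ω| ^ p) / (epNorm μ p ξ).toReal ^ p)) ∂μ ≤ 2 := by
  set τ := (epNorm μ p ξ).toReal
  set F : ℝ → Ω → ℝ≥0∞ := fun K ω => ENNReal.ofReal (Real.exp ((∑ i, |ξ i ω| ^ p) / K ^ p))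
  have hF : ∀ ω, Tendsto (fun K => F K ω) (𝓝[>] τ) (𝓝 (F τ ω)) := fun ω =>
    (ENNReal.tendsto_ofReal ((by fun_prop (disch := positivity) :
      ContinuousAt (fun K : ℝ => Real.exp ((∑ i, |ξ i ω| ^ p) / K ^ p)) τ).tendsto)).mono_left
      nhdsWithin_le_nhds
  have hle : ∀ᶠ K in 𝓝[>] τ, ∫⁻ ω, F K ω ∂μ ≤ 2 := by
    filter_upwards [self_mem_nhdsWithin] with K hK
    refine lintegral_exp_le_two_of_epNorm_lt hp ?_
    rw [← ENNReal.ofReal_toReal ((ENNReal.toReal_pos_iff.mp hτ).2.ne)]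
    exact (ENNReal.ofReal_lt_ofReal_iff_of_nonneg hτ.le).mpr hK
  calc ∫⁻ ω, F τ ω ∂μ = ∫⁻ ω, liminf (fun K => F K ω) (𝓝[>] τ) ∂μ := by
        simp_rw [(hF _).liminf_eq]
    _ ≤ liminf (fun K => ∫⁻ ω, F K ω ∂μ) (𝓝[>] τ) :=
        lintegral_liminf_le fun K => by fun_prop
    _ ≤ 2 := liminf_le_of_frequently_le hle.frequently

end Orlicz

section Psi1

variable {Ω : Type*} [MeasurableSpace Ω] {μ : Measure Ω}

lemma psi1Norm_le_ofReal {η : Ω → ℝ} {K : ℝ} (hK : 0 < K)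
    (h : ∫⁻ ω, ENNReal.ofReal (Real.exp (|η ω / K|)) ∂μ ≤ 2) :
    psi1Norm μ η ≤ ENNReal.ofReal K :=
  (iInf_le _ K).trans ((iInf_le _ hK).trans (iInf_le _ h))

lemma integrable_exp_of_lintegral_exp_le_two {g : Ω → ℝ} (hg : Measurable g)
    (h : ∫⁻ ω, ENNReal.ofReal (Real.exp (g ω)) ∂μ ≤ 2) :
    Integrable (fun ω => Real.exp (g ω)) μ :=
  (lintegral_ofReal_ne_top_iff_integrable (by fun_prop)
    (ae_of_all _ fun ω => (Real.exp_pos (g ω)).le)).mp (ne_top_of_le_ne_top (by simp) h)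

lemma integrable_of_lintegral_exp_le_two {g : Ω → ℝ} (hg : Measurable g) (hg0 : 0 ≤ g)
    (h : ∫⁻ ω, ENNReal.ofReal (Real.exp (g ω)) ∂μ ≤ 2) : Integrable g μ :=
  (integrable_exp_of_lintegral_exp_le_two hg h).mono' hg.aestronglyMeasurable
    (ae_of_all _ fun ω => by
      rw [Real.norm_of_nonneg (hg0 ω)]
      linarith [Real.add_one_le_exp (g ω)])

variable [IsProbabilityMeasure μ]

lemma integral_le_log_two_of_lintegral_exp_le_two {g : Ω → ℝ} (hg : Measurable g) (hg0 : 0 ≤ g)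
    (h : ∫⁻ ω, ENNReal.ofReal (Real.exp (g ω)) ∂μ ≤ 2) : ∫ ω, g ω ∂μ ≤ Real.log 2 := by
  have hexp := integrable_exp_of_lintegral_exp_le_two hg h
  have hjensen : Real.exp (∫ ω, g ω ∂μ) ≤ ∫ ω, Real.exp (g ω) ∂μ :=
    convexOn_exp.map_integral_le Real.continuous_exp.continuousOn isClosed_univ
      (ae_of_all _ fun _ => Set.mem_univ _) (integrable_of_lintegral_exp_le_two hg hg0 h) hexp
  have htwo : ∫ ω, Real.exp (g ω) ∂μ ≤ 2 := by
    rw [← ENNReal.ofReal_le_ofReal_iff zero_le_two, ofReal_integral_eq_lintegral_ofReal hexp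
      (ae_of_all _ fun ω => (Real.exp_pos (g ω)).le)]
    simpa using h
  rw [← Real.exp_le_exp, Real.exp_log zero_lt_two]
  exact hjensen.trans htwo

/-- Jensen gives `|E X| ≤ a log 2`, and convexity of `exp` gives
`exp ((g + log 2) / 2) ≤ exp g / 2 + 1`. -/
lemma psi1Norm_sub_integral_le {X g : Ω → ℝ} (hg : Measurable g) (hg0 : 0 ≤ g)
    (hexp : ∫⁻ ω, ENNReal.ofReal (Real.exp (g ω)) ∂μ ≤ 2) {a : ℝ} (ha : 0 < a)
    (hXg : ∀ ω, |X ω| ≤ a * g ω) :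
    psi1Norm μ (fun ω => X ω - ∫ ω', X ω' ∂μ) ≤ ENNReal.ofReal (2 * a) := by
  have hgi := integrable_of_lintegral_exp_le_two hg hg0 hexp
  have hmean : |∫ ω, X ω ∂μ| ≤ a * Real.log 2 := calc
    |∫ ω, X ω ∂μ| ≤ ∫ ω, |X ω| ∂μ := abs_integral_le_integral_abs
    _ ≤ ∫ ω, a * g ω ∂μ := integral_mono_of_nonneg (ae_of_all _ fun _ => abs_nonneg _)
        (hgi.const_mul a) (ae_of_all _ hXg)
    _ ≤ a * Real.log 2 := by
        rw [integral_const_mul]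
        exact mul_le_mul_of_nonneg_left
          (integral_le_log_two_of_lintegral_exp_le_two hg hg0 hexp) ha.le
  have hpt : ∀ ω, Real.exp |(X ω - ∫ ω', X ω' ∂μ) / (2 * a)| ≤ Real.exp (g ω) / 2 + 1 := by
    intro ω
    have hle : |(X ω - ∫ ω', X ω' ∂μ) / (2 * a)| ≤ 2⁻¹ * g ω + 2⁻¹ * Real.log 2 := by
      have h2a : (0 : ℝ) < 2 * a := by positivity
      rw [abs_div, abs_of_pos h2a, div_le_iff₀ h2a]
      linarith [abs_sub (X ω) (∫ ω', X ω' ∂μ), hXg ω]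
    calc Real.exp |(X ω - ∫ ω', X ω' ∂μ) / (2 * a)|
        ≤ Real.exp (2⁻¹ * g ω + 2⁻¹ * Real.log 2) := Real.exp_le_exp.mpr hle
      _ ≤ 2⁻¹ * Real.exp (g ω) + 2⁻¹ * Real.exp (Real.log 2) :=
          convexOn_exp.2 (Set.mem_univ _) (Set.mem_univ _) (by norm_num) (by norm_num)
            (by norm_num)
      _ = Real.exp (g ω) / 2 + 1 := by rw [Real.exp_log zero_lt_two]; ring
  refine psi1Norm_le_ofReal (by positivity) ?_
  calc ∫⁻ ω, ENNReal.ofReal (Real.exp |(X ω - ∫ ω', X ω' ∂μ) / (2 * a)|) ∂μ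
      ≤ ∫⁻ ω, (ENNReal.ofReal (Real.exp (g ω)) / 2 + 1) ∂μ := by
        refine lintegral_mono fun ω => (ENNReal.ofReal_le_ofReal (hpt ω)).trans_eq ?_
        rw [ENNReal.ofReal_add (by positivity) zero_le_one, ENNReal.ofReal_div_of_pos two_pos]
        simp
    _ = (∫⁻ ω, ENNReal.ofReal (Real.exp (g ω)) ∂μ) / 2 + 1 := by
        simp only [div_eq_mul_inv]
        rw [lintegral_add_right _ measurable_const, lintegral_mul_const _ (by fun_prop),
          lintegral_one, measure_univ]
    _ ≤ 2 / 2 + 1 := by gcongr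
    _ = 2 := by rw [ENNReal.div_self two_ne_zero ofNat_ne_top, one_add_one_eq_two]

end Psi1

section Tail

variable {Ω : Type*} [MeasurableSpace Ω] {μ : Measure Ω}

lemma measure_ge_le_exp_neg_mul_lintegral_exp {f : Ω → ℝ} (hf : AEMeasurable f μ) (a : ℝ) :
    μ {ω | a ≤ f ω} ≤
      ENNReal.ofReal (Real.exp (-a)) * ∫⁻ ω, ENNReal.ofReal (Real.exp (f ω)) ∂μ := by
  have hmarkov : ENNReal.ofReal (Real.exp a) * μ {ω | a ≤ f ω} ≤
      ∫⁻ ω, ENNReal.ofReal (Real.exp (f ω)) ∂μ :=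
    (mul_le_mul_right (measure_mono fun ω (hω : a ≤ f ω) =>
      ENNReal.ofReal_le_ofReal (Real.exp_le_exp.mpr hω)) _).trans
      (mul_meas_ge_le_lintegral₀ (by fun_prop) _)
  have hinv : ENNReal.ofReal (Real.exp (-a)) * ENNReal.ofReal (Real.exp a) = 1 := by
    rw [← ENNReal.ofReal_mul (Real.exp_pos _).le, ← Real.exp_add, neg_add_cancel, Real.exp_zero,
      ENNReal.ofReal_one]
  calc μ {ω | a ≤ f ω}
      = ENNReal.ofReal (Real.exp (-a)) * (ENNReal.ofReal (Real.exp a) * μ {ω | a ≤ f ω}) := by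
        rw [← mul_assoc, hinv, one_mul]
    _ ≤ _ := by gcongr

lemma measure_le_abs_le_of_lintegral_exp_le {η : Ω → ℝ} (hη : AEMeasurable η μ) {s t V : ℝ}
    (hs : 0 ≤ s)
    (hpos : ∫⁻ ω, ENNReal.ofReal (Real.exp (s * η ω)) ∂μ ≤ ENNReal.ofReal (Real.exp V))
    (hneg : ∫⁻ ω, ENNReal.ofReal (Real.exp (-s * η ω)) ∂μ ≤ ENNReal.ofReal (Real.exp V)) :
    μ {ω | t ≤ |η ω|} ≤ ENNReal.ofReal (2 * Real.exp (V - s * t)) := by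
  have hside : ∀ σ : ℝ, ∫⁻ ω, ENNReal.ofReal (Real.exp (σ * s * η ω)) ∂μ ≤
      ENNReal.ofReal (Real.exp V) → μ {ω | t ≤ σ * η ω} ≤ ENNReal.ofReal (Real.exp (V - s * t)) :=
    fun σ hσ => calc
      μ {ω | t ≤ σ * η ω} ≤ μ {ω | s * t ≤ σ * s * η ω} := measure_mono fun ω hω => by
        have hω : t ≤ σ * η ω := hω
        show s * t ≤ σ * s * η ω
        nlinarith
      _ ≤ ENNReal.ofReal (Real.exp (-(s * t))) * ENNReal.ofReal (Real.exp V) :=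
        (measure_ge_le_exp_neg_mul_lintegral_exp (by fun_prop) _).trans (by gcongr)
      _ = ENNReal.ofReal (Real.exp (V - s * t)) := by
        rw [← ENNReal.ofReal_mul (Real.exp_pos _).le, ← Real.exp_add, neg_add_eq_sub]
  calc μ {ω | t ≤ |η ω|} ≤ μ ({ω | t ≤ 1 * η ω} ∪ {ω | t ≤ -1 * η ω}) :=
        measure_mono fun ω (hω : t ≤ |η ω|) => by
          simpa only [Set.mem_union, Set.mem_ofPred_eq, one_mul, neg_one_mul] using le_abs.mp hω
    _ ≤ μ {ω | t ≤ 1 * η ω} + μ {ω | t ≤ -1 * η ω} := measure_union_le _ _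
    _ ≤ ENNReal.ofReal (Real.exp (V - s * t)) + ENNReal.ofReal (Real.exp (V - s * t)) :=
        add_le_add (hside 1 (by simpa only [one_mul] using hpos))
          (hside (-1) (by simpa only [neg_mul, one_mul] using hneg))
    _ = ENNReal.ofReal (2 * Real.exp (V - s * t)) := by
        rw [← ENNReal.ofReal_add (Real.exp_pos _).le (Real.exp_pos _).le, two_mul]

/-- Chernoff's bound, with `s = t / (2C²K²)` below the threshold `t = 2CK` and `s = 1/(CK)`
above it. -/
lemma measure_le_abs_le_of_lintegral_exp_le_exp_sq {η : Ω → ℝ} (hη : AEMeasurable η μ)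
    {C K t : ℝ} (hC : 0 < C) (hK : 0 < K) (ht : 0 ≤ t)
    (hmgf : ∀ s : ℝ, C * K * |s| ≤ 1 →
      ∫⁻ ω, ENNReal.ofReal (Real.exp (s * η ω)) ∂μ ≤
        ENNReal.ofReal (Real.exp (C ^ 2 * K ^ 2 * s ^ 2))) :
    μ {ω | t ≤ |η ω|} ≤ ENNReal.ofReal (2 * Real.exp
      (-(if t ≤ 2 * C * K then t ^ 2 / (4 * C ^ 2 * K ^ 2) else t / (C * K) - 1))) := by
  have hchernoff : ∀ s, 0 ≤ s → C * K * s ≤ 1 →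
      μ {ω | t ≤ |η ω|} ≤ ENNReal.ofReal (2 * Real.exp (C ^ 2 * K ^ 2 * s ^ 2 - s * t)) :=
    fun s hs hsK => measure_le_abs_le_of_lintegral_exp_le hη hs
      (hmgf s (by rwa [abs_of_nonneg hs]))
      (by simpa only [neg_sq] using hmgf (-s) (by rwa [abs_neg, abs_of_nonneg hs]))
  split_ifs with hsmall
  · convert hchernoff (t / (2 * C ^ 2 * K ^ 2)) (by positivity) ?_ using 4
    · field_simp; ring
    · rw [show C * K * (t / (2 * C ^ 2 * K ^ 2)) = t / (2 * C * K) by field_simp,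
        div_le_one (by positivity)]
      exact hsmall
  · convert hchernoff (1 / (C * K)) (by positivity) (mul_one_div_cancel (by positivity)).le
      using 4
    field_simp; ring

end Tail

lemma lintegral_exp_mul_le_of_psi1Norm_le {Ω : Type*} [MeasurableSpace Ω] {μ : Measure Ω}
    {η : Ω → ℝ} {C K : ℝ} (hC : 0 ≤ C) (hK : 0 ≤ K) (hψ : psi1Norm μ η ≤ ENNReal.ofReal K)
    (hmgf : ∀ s : ℝ, C * (psi1Norm μ η).toReal * |s| ≤ 1 →
      ∫⁻ ω, ENNReal.ofReal (Real.exp (s * η ω)) ∂μ ≤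
        ENNReal.ofReal (Real.exp (C ^ 2 * (psi1Norm μ η).toReal ^ 2 * s ^ 2)))
    (s : ℝ) (hs : C * K * |s| ≤ 1) :
    ∫⁻ ω, ENNReal.ofReal (Real.exp (s * η ω)) ∂μ ≤
      ENNReal.ofReal (Real.exp (C ^ 2 * K ^ 2 * s ^ 2)) := by
  have hσ : (psi1Norm μ η).toReal ≤ K := ENNReal.toReal_le_of_le_ofReal hK hψ
  refine (hmgf s (le_trans (by gcongr) hs)).trans ?_
  gcongr

lemma integrable_chaos_and_psi1Norm_sub_integral_le {Ω : Type*} [MeasurableSpace Ω]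
    {μ : Measure Ω} [IsProbabilityMeasure μ] {d n : ℕ} (hd : 2 ≤ d) {A : (Fin d → Fin n) → ℝ}
    {ξ : Fin n → Ω → ℝ} (hmeas : ∀ i, Measurable (ξ i))
    (hM : 0 < arrayNorm A * (epNorm μ (d : ℝ) ξ).toReal ^ d) :
    Integrable (fun ω => chaos A (fun i => ξ i ω)) μ ∧
      psi1Norm μ (fun ω => chaos A (fun i => ξ i ω) - ∫ ω', chaos A (fun i => ξ i ω') ∂μ) ≤
        ENNReal.ofReal (2 * (arrayNorm A * (epNorm μ (d : ℝ) ξ).toReal ^ d)) := by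
  set τ := (epNorm μ (d : ℝ) ξ).toReal
  have hτ : 0 < τ := lt_of_pow_lt_pow_left₀ d ENNReal.toReal_nonneg <| by
    rw [zero_pow (by omega)]; exact pos_of_mul_pos_right hM (arrayNorm_nonneg A)
  set g : Ω → ℝ := fun ω => (∑ i, |ξ i ω| ^ (d : ℝ)) / τ ^ (d : ℝ)
  have hg : Measurable g := by fun_prop
  have hg0 : 0 ≤ g := fun ω => by positivity
  have hexp : ∫⁻ ω, ENNReal.ofReal (Real.exp (g ω)) ∂μ ≤ 2 :=
    lintegral_exp_div_epNorm_le_two hmeas (by positivity) hτ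
  have hXg : ∀ ω, |chaos A (fun i => ξ i ω)| ≤ arrayNorm A * τ ^ d * g ω := fun ω =>
    (abs_chaos_le hd A _).trans_eq (by simp only [g, Real.rpow_natCast]; field_simp)
  exact ⟨((integrable_of_lintegral_exp_le_two hg hg0 hexp).const_mul _).mono'
      (measurable_chaos A hmeas).aestronglyMeasurable (ae_of_all _ hXg),
    psi1Norm_sub_integral_le hg hg0 hexp hM hXg⟩

theorem chaos_tail_bound_general {Ω : Type u} [MeasurableSpace Ω] (μ : Measure Ω)
    [IsProbabilityMeasure μ] (d n : ℕ) (hd : 2 ≤ d)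
    (A : (Fin d → Fin n) → ℝ) (ξ : Fin n → Ω → ℝ) (hmeas : ∀ i, Measurable (ξ i))
    (C : ℝ) (hC : 0 < C)
    (hCprop : ∀ (Ω' : Type u) [MeasurableSpace Ω'] (μ' : Measure Ω')
      [IsProbabilityMeasure μ'] (η : Ω' → ℝ), Measurable η → Integrable η μ' →
      (∫ ω, η ω ∂μ') = 0 → psi1Norm μ' η < ⊤ →
      ∀ t : ℝ, C * (psi1Norm μ' η).toReal * |t| ≤ 1 →
        ∫⁻ ω, ENNReal.ofReal (Real.exp (t * η ω)) ∂μ' ≤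
          ENNReal.ofReal (Real.exp (C ^ 2 * (psi1Norm μ' η).toReal ^ 2 * t ^ 2)))
    (t : ℝ) (ht : 0 ≤ t) :
    μ {ω | t ≤ |chaos A (fun i => ξ i ω) - ∫ ω', chaos A (fun i => ξ i ω') ∂μ|} ≤
      ENNReal.ofReal (2 * Real.exp
        (-(if t ≤ 4 * C * arrayNorm A * (epNorm μ (d : ℝ) ξ).toReal ^ d then
            t ^ 2 / (16 * C ^ 2 * arrayNorm A ^ 2 * ((epNorm μ (d : ℝ) ξ).toReal ^ d) ^ 2)
          else
            t / (2 * C * arrayNorm A * (epNorm μ (d : ℝ) ξ).toReal ^ d) - 1))) := by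
  set τ := (epNorm μ (d : ℝ) ξ).toReal
  set M := arrayNorm A * τ ^ d
  rw [show 4 * C * arrayNorm A * τ ^ d = 2 * C * (2 * M) by ring,
    show 16 * C ^ 2 * arrayNorm A ^ 2 * (τ ^ d) ^ 2 = 4 * C ^ 2 * (2 * M) ^ 2 by ring,
    show 2 * C * arrayNorm A * τ ^ d = C * (2 * M) by ring]
  -- For `M = 0` the junk divisions by zero make the right-hand side at least `1`.
  rcases (mul_nonneg (arrayNorm_nonneg A) (by positivity) : 0 ≤ M).eq_or_lt with hM | hM
  · refine prob_le_one.trans (ENNReal.one_le_ofReal.mpr ?_)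
    rw [show M = 0 from hM.symm]
    split_ifs
    · simp
    · simpa using (by linarith [Real.add_one_le_exp 1] : (1 : ℝ) ≤ 2 * Real.exp 1)
  have hX := measurable_chaos A hmeas
  obtain ⟨hXi, hψ⟩ := integrable_chaos_and_psi1Norm_sub_integral_le hd hmeas hM
  refine measure_le_abs_le_of_lintegral_exp_le_exp_sq (hX.sub_const _).aemeasurable hC
    (by positivity) ht (lintegral_exp_mul_le_of_psi1Norm_le hC.le (by positivity) hψ ?_)
  exact hCprop Ω μ _ (hX.sub_const _) (hXi.sub (integrable_const _))
    (by rw [integral_sub hXi (integrable_const _)]; simp) (hψ.trans_lt ofReal_lt_top)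

/-- Let `d ≥ 2`, `d′ = d/(d-1)`, `A` a `d`-fold array, `ξ` a random vector
with `‖ξ‖_{E_d} < ∞`, and `C > 0` a constant such that every centered random variable `η`
with finite ψ_1-norm satisfies `E exp(tη) ≤ exp(C²‖η‖_{ψ_1}²t²)` for `|t| ≤ 1/(C‖η‖_{ψ_1})`.
Then for every `t ≥ 0`, `P(|S_d(ξ) - E S_d(ξ)| ≥ t) ≤ 2 e^{-g(t)}`, with
`g(t) = t²/(16C²‖A‖_{d′}²‖ξ‖_{E_d}^{2d})` for `0 ≤ t ≤ 4C‖A‖_{d′}‖ξ‖_{E_d}^d` and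
`g(t) = t/(2C‖A‖_{d′}‖ξ‖_{E_d}^d) - 1` for larger `t`. -/
theorem chaos_tail_bound {Ω : Type u} [MeasurableSpace Ω] (μ : Measure Ω)
    [IsProbabilityMeasure μ] (d n : ℕ) (hd : 2 ≤ d)
    (A : (Fin d → Fin n) → ℝ) (ξ : Fin n → Ω → ℝ) (hmeas : ∀ i, Measurable (ξ i))
    (hfin : epNorm μ (d : ℝ) ξ < ⊤)
    (C : ℝ) (hC : 0 < C)
    (hCprop : ∀ (Ω' : Type u) [MeasurableSpace Ω'] (μ' : Measure Ω')
      [IsProbabilityMeasure μ'] (η : Ω' → ℝ), Measurable η → Integrable η μ' →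
      (∫ ω, η ω ∂μ') = 0 → psi1Norm μ' η < ⊤ →
      ∀ t : ℝ, C * (psi1Norm μ' η).toReal * |t| ≤ 1 →
        ∫⁻ ω, ENNReal.ofReal (Real.exp (t * η ω)) ∂μ' ≤
          ENNReal.ofReal (Real.exp (C ^ 2 * (psi1Norm μ' η).toReal ^ 2 * t ^ 2)))
    (t : ℝ) (ht : 0 ≤ t) :
    μ {ω | t ≤ |chaos A (fun i => ξ i ω) - ∫ ω', chaos A (fun i => ξ i ω') ∂μ|} ≤
      ENNReal.ofReal (2 * Real.exp
        (-(if t ≤ 4 * C * arrayNorm A * (epNorm μ (d : ℝ) ξ).toReal ^ d then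
            t ^ 2 / (16 * C ^ 2 * arrayNorm A ^ 2 * ((epNorm μ (d : ℝ) ξ).toReal ^ d) ^ 2)
          else
            t / (2 * C * arrayNorm A * (epNorm μ (d : ℝ) ξ).toReal ^ d) - 1))) :=
  chaos_tail_bound_general μ d n hd A ξ hmeas C hC hCprop t ht
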